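/- arXiv:1911.00238 — 2 statements merged into one kernel-verified Lean document; each statement's English description precedes it below -/
import Mathlib

section
/- For probability densities p and q on a finite set X, the value of the optimal discriminator objective max_D [ Σ_x p(x) log D(x) + Σ_x q(x) log(1 − D(x)) ] equals −2 log 2 + 2·JSD(p‖q), where JSD is the Jensen–Shannon divergence; consequently the generator objective is minimized exactly when q = p. -/
private lemma gibbs_term {a b : ℝ} (ha : 0 ≤ a) (hb : 0 ≤ b)
    (hab : a ≠ 0 → b ≠ 0) : a - b ≤ a * Real.log (a / b) := by
  rcases eq_or_lt_of_le ha with h | h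
  · simp [← h]; linarith
  · have hb' : 0 < b := lt_of_le_of_ne hb (Ne.symm (hab (ne_of_gt h)))
    have h1 : Real.log (b / a) ≤ b / a - 1 :=
      Real.log_le_sub_one_of_pos (by positivity)
    have h2 : Real.log (b / a) = - Real.log (a / b) := by
      rw [← Real.log_inv]; congr 1; field_simp
    rw [h2] at h1
    have := mul_le_mul_of_nonneg_left (by linarith : 1 - b / a ≤ Real.log (a / b)) h.le
    have hba : a * (1 - b / a) = a - b := by field_simp
    linarith [hba ▸ this]

private lemma gibbs_eq {a b : ℝ} (ha : 0 ≤ a) (hb : 0 ≤ b)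
    (hab : a ≠ 0 → b ≠ 0) (h : a * Real.log (a / b) = a - b) : a = b := by
  rcases eq_or_lt_of_le ha with h0 | h0
  · simp [← h0] at h ⊢; linarith
  · have hb' : 0 < b := lt_of_le_of_ne hb (Ne.symm (hab (ne_of_gt h0)))
    by_contra hne
    have hba : b / a ≠ 1 := by
      intro hc
      apply hne
      field_simp at hc
      linarith
    have h1 : Real.log (b / a) < b / a - 1 :=
      Real.log_lt_sub_one_of_pos (by positivity) hba
    have h2 : Real.log (b / a) = - Real.log (a / b) := by
      rw [← Real.log_inv]; congr 1; field_simp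
    rw [h2] at h1
    have := mul_lt_mul_of_pos_left (by linarith : 1 - b / a < Real.log (a / b)) h0
    have hba2 : a * (1 - b / a) = a - b := by field_simp
    rw [hba2, h] at this
    linarith

/-- The optimal discriminator value Σ p log(p/(p+q)) + Σ q log(q/(p+q)) equals
−2 log 2 + 2·JSD(p‖q); consequently it is minimized (value −2 log 2) exactly when q = p. -/
theorem sgail_stmt6 {X : Type*} [Fintype X]
    (p q : X → ℝ) (hp0 : ∀ x, 0 ≤ p x) (hq0 : ∀ x, 0 ≤ q x)
    (hp1 : ∑ x, p x = 1) (hq1 : ∑ x, q x = 1)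
    (m : X → ℝ) (hm : ∀ x, m x = (p x + q x) / 2)
    (JSD : ℝ)
    (hJSD : JSD = (1/2) * ∑ x, p x * Real.log (p x / m x)
                + (1/2) * ∑ x, q x * Real.log (q x / m x)) :
    (∑ x, (p x * Real.log (p x / (p x + q x)) + q x * Real.log (q x / (p x + q x)))
        = -2 * Real.log 2 + 2 * JSD) ∧
    (-2 * Real.log 2
        ≤ ∑ x, (p x * Real.log (p x / (p x + q x)) + q x * Real.log (q x / (p x + q x)))) ∧
    ((∑ x, (p x * Real.log (p x / (p x + q x)) + q x * Real.log (q x / (p x + q x)))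
        = -2 * Real.log 2) ↔ q = p) := by
  have hm0 : ∀ x, 0 ≤ m x := by
    intro x; rw [hm]; have := hp0 x; have := hq0 x; linarith
  have hpm : ∀ x, p x ≠ 0 → m x ≠ 0 := by
    intro x hpx
    have : 0 < p x := lt_of_le_of_ne (hp0 x) (Ne.symm hpx)
    have := hq0 x
    rw [hm]; positivity
  have hqm : ∀ x, q x ≠ 0 → m x ≠ 0 := by
    intro x hqx
    have : 0 < q x := lt_of_le_of_ne (hq0 x) (Ne.symm hqx)
    have := hp0 x
    rw [hm]; positivity
  have hmsum : ∑ x, m x = 1 := by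
    rw [Finset.sum_congr rfl fun x _ => hm x, ← Finset.sum_div,
      Finset.sum_add_distrib, hp1, hq1]
    norm_num
  -- pointwise rewriting
  have key : ∀ x, p x * Real.log (p x / (p x + q x)) + q x * Real.log (q x / (p x + q x))
      = (p x * Real.log (p x / m x) + q x * Real.log (q x / m x))
        - (p x * Real.log 2 + q x * Real.log 2) := by
    intro x
    have hp' : p x * Real.log (p x / (p x + q x))
        = p x * Real.log (p x / m x) - p x * Real.log 2 := by
      rcases eq_or_lt_of_le (hp0 x) with h0 | h0
      · simp [← h0]
      · have hm' : 0 < m x := lt_of_le_of_ne (hm0 x) (Ne.symm (hpm x (ne_of_gt h0)))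
        have heq : p x / (p x + q x) = (p x / m x) / 2 := by
          rw [hm]
          have : p x + q x ≠ 0 := by rw [hm] at hm'; intro hc; rw [hc] at hm'; norm_num at hm'
          field_simp
        rw [heq, Real.log_div (by positivity) (by norm_num)]
        ring
    have hq' : q x * Real.log (q x / (p x + q x))
        = q x * Real.log (q x / m x) - q x * Real.log 2 := by
      rcases eq_or_lt_of_le (hq0 x) with h0 | h0
      · simp [← h0]
      · have hm' : 0 < m x := lt_of_le_of_ne (hm0 x) (Ne.symm (hqm x (ne_of_gt h0)))
        have heq : q x / (p x + q x) = (q x / m x) / 2 := by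
          rw [hm]
          have : p x + q x ≠ 0 := by rw [hm] at hm'; intro hc; rw [hc] at hm'; norm_num at hm'
          field_simp
        rw [heq, Real.log_div (by positivity) (by norm_num)]
        ring
    rw [hp', hq']; ring
  set A := ∑ x, p x * Real.log (p x / m x) with hAdef
  set B := ∑ x, q x * Real.log (q x / m x) with hBdef
  have hsum : ∑ x, (p x * Real.log (p x / (p x + q x)) + q x * Real.log (q x / (p x + q x)))
      = -2 * Real.log 2 + 2 * JSD := by
    rw [Finset.sum_congr rfl fun x _ => key x, Finset.sum_sub_distrib,
      Finset.sum_add_distrib, Finset.sum_add_distrib, ← Finset.sum_mul, ← Finset.sum_mul,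
      hp1, hq1, hJSD]
    ring
  -- nonnegativity of A and B
  have hA0 : 0 ≤ A := by
    have h1 : ∑ x, (p x - m x) ≤ A :=
      Finset.sum_le_sum fun x _ => gibbs_term (hp0 x) (hm0 x) (hpm x)
    have h2 : ∑ x, (p x - m x) = 0 := by
      rw [Finset.sum_sub_distrib, hp1, hmsum]; ring
    linarith
  have hB0 : 0 ≤ B := by
    have h1 : ∑ x, (q x - m x) ≤ B :=
      Finset.sum_le_sum fun x _ => gibbs_term (hq0 x) (hm0 x) (hqm x)
    have h2 : ∑ x, (q x - m x) = 0 := by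
      rw [Finset.sum_sub_distrib, hq1, hmsum]; ring
    linarith
  have hJ0 : 0 ≤ JSD := by rw [hJSD]; linarith
  refine ⟨hsum, by rw [hsum]; linarith, ?_, ?_⟩
  · -- forward: sum = -2 log 2 → q = p
    intro h
    rw [hsum] at h
    have hJ : JSD = 0 := by linarith
    rw [hJSD] at hJ
    have hA : A = 0 := by linarith
    -- termwise zero for the A-sum shifted by (p - m)
    have hsub : ∑ x, (p x * Real.log (p x / m x) - (p x - m x)) = 0 := by
      rw [Finset.sum_sub_distrib, ← hAdef, hA, Finset.sum_sub_distrib, hp1, hmsum]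
      ring
    have hterm : ∀ x ∈ Finset.univ,
        p x * Real.log (p x / m x) - (p x - m x) = 0 := by
      rw [← Finset.sum_eq_zero_iff_of_nonneg]
      · exact hsub
      · intro x _
        have := gibbs_term (hp0 x) (hm0 x) (hpm x)
        linarith
    funext x
    have h1 := hterm x (Finset.mem_univ x)
    have h2 : p x = m x :=
      gibbs_eq (hp0 x) (hm0 x) (hpm x) (by linarith)
    rw [hm] at h2
    linarith
  · -- backward: q = p → sum = -2 log 2
    intro hqp
    rw [hsum]
    have hmp : ∀ x, m x = p x := by intro x; rw [hm, hqp]; ring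
    have hA : A = 0 := by
      rw [hAdef]
      apply Finset.sum_eq_zero
      intro x _
      rcases eq_or_lt_of_le (hp0 x) with h0 | h0
      · simp [← h0]
      · rw [hmp x, div_self (ne_of_gt h0), Real.log_one, mul_zero]
    have hB : B = 0 := by
      rw [hBdef]
      apply Finset.sum_eq_zero
      intro x _
      rcases eq_or_lt_of_le (hq0 x) with h0 | h0
      · simp [← h0]
      · rw [hmp x, hqp, div_self (by rw [hqp] at h0; exact ne_of_gt h0), Real.log_one, mul_zero]
    have : JSD = 0 := by rw [hJSD, hA, hB]; ring
    rw [this]; ring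
end

section
/- In a finite discounted MDP with initial distribution ρ₀ and discount γ ∈ (0,1), the map π ↦ ρ_π, sending a stationary policy to its (unnormalized) discounted occupancy measure ρ_π(s,a) = Σ_{t≥0} γ^t P(s_t = s, a_t = a), is a bijection between stationary policies (restricted to states with positive occupancy) and the set M = { ρ : S × A → ℝ≥0 : Σ_a ρ(s,a) = ρ₀(s) + γ Σ_{s',a'} P(s|s',a') ρ(s',a') for all s }, with inverse π(a|s) = ρ(s,a)/Σ_{a'} ρ(s,a'). -/
open scoped BigOperators

/-- The time-`t` state distribution of a stationary policy `π` started from `ρ0`. -/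
def sgailStateDist {S A : Type*} [Fintype S] [Fintype A]
    (P : S → A → S → ℝ) (π : S → A → ℝ) (ρ0 : S → ℝ) : ℕ → S → ℝ
  | 0 => ρ0
  | (t + 1) => fun s => ∑ s', ∑ a, sgailStateDist P π ρ0 t s' * π s' a * P s' a s

/-- The discounted occupancy measure ρ_π(s,a) = Σ_t γ^t P(s_t = s, a_t = a). -/
noncomputable def sgailOcc {S A : Type*} [Fintype S] [Fintype A]
    (P : S → A → S → ℝ) (π : S → A → ℝ) (ρ0 : S → ℝ) (γ : ℝ) (s : S) (a : A) : ℝ :=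
  ∑' t : ℕ, γ ^ t * sgailStateDist P π ρ0 t s * π s a

section aux
variable {S A : Type*} [Fintype S] [Fintype A]

lemma sgail_dist_props (P : S → A → S → ℝ) (hP0 : ∀ s a s', 0 ≤ P s a s')
    (hP1 : ∀ s a, ∑ s', P s a s' = 1)
    (π : S → A → ℝ) (hπ0 : ∀ s a, 0 ≤ π s a) (hπ1 : ∀ s, ∑ a, π s a = 1)
    (ρ0 : S → ℝ) (hρ00 : ∀ s, 0 ≤ ρ0 s) (hρ01 : ∑ s, ρ0 s = 1) :
    ∀ t, (∀ s, 0 ≤ sgailStateDist P π ρ0 t s) ∧ (∑ s, sgailStateDist P π ρ0 t s = 1) := by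
  intro t
  induction t with
  | zero => exact ⟨hρ00, hρ01⟩
  | succ t ih =>
    constructor
    · intro s
      apply Finset.sum_nonneg; intro s' _
      apply Finset.sum_nonneg; intro a _
      exact mul_nonneg (mul_nonneg (ih.1 s') (hπ0 s' a)) (hP0 s' a s)
    · show ∑ s, ∑ s', ∑ a, sgailStateDist P π ρ0 t s' * π s' a * P s' a s = 1
      rw [Finset.sum_comm]
      have : ∀ s' : S, ∑ s, ∑ a, sgailStateDist P π ρ0 t s' * π s' a * P s' a s
          = sgailStateDist P π ρ0 t s' := by
        intro s'
        rw [Finset.sum_comm]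
        calc ∑ a, ∑ s, sgailStateDist P π ρ0 t s' * π s' a * P s' a s
            = ∑ a, sgailStateDist P π ρ0 t s' * π s' a * ∑ s, P s' a s := by
              simp [Finset.mul_sum]
          _ = ∑ a, sgailStateDist P π ρ0 t s' * π s' a := by
              simp [hP1]
          _ = sgailStateDist P π ρ0 t s' := by
              rw [← Finset.mul_sum, hπ1, mul_one]
      simp only [this]
      exact ih.2

lemma sgail_summable (P : S → A → S → ℝ) (hP0 : ∀ s a s', 0 ≤ P s a s')
    (hP1 : ∀ s a, ∑ s', P s a s' = 1)
    (π : S → A → ℝ) (hπ0 : ∀ s a, 0 ≤ π s a) (hπ1 : ∀ s, ∑ a, π s a = 1)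
    (ρ0 : S → ℝ) (hρ00 : ∀ s, 0 ≤ ρ0 s) (hρ01 : ∑ s, ρ0 s = 1)
    (γ : ℝ) (hγ : 0 ≤ γ) (hγ1 : γ < 1) (s : S) :
    Summable (fun t : ℕ => γ ^ t * sgailStateDist P π ρ0 t s) := by
  have hd := sgail_dist_props P hP0 hP1 π hπ0 hπ1 ρ0 hρ00 hρ01
  apply Summable.of_nonneg_of_le
    (fun t => mul_nonneg (pow_nonneg hγ t) ((hd t).1 s))
    (fun t => ?_) (summable_geometric_of_lt_one hγ hγ1)
  have h1 : sgailStateDist P π ρ0 t s ≤ 1 := by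
    rw [← (hd t).2]
    exact Finset.single_le_sum (fun s' _ => (hd t).1 s') (Finset.mem_univ s)
  calc γ ^ t * sgailStateDist P π ρ0 t s ≤ γ ^ t * 1 :=
        mul_le_mul_of_nonneg_left h1 (pow_nonneg hγ t)
    _ = γ ^ t := mul_one _

lemma sgail_l1_unique (γ : ℝ) (hγ0 : 0 ≤ γ) (hγ1 : γ < 1)
    (q : S → S → ℝ) (hq0 : ∀ s' s, 0 ≤ q s' s) (hq1 : ∀ s', ∑ s, q s' s = 1)
    (h : S → ℝ) (hh : ∀ s, h s = γ * ∑ s', h s' * q s' s) : ∀ s, h s = 0 := by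
  set L := ∑ s, |h s| with hL
  have hLnn : 0 ≤ L := Finset.sum_nonneg fun s _ => abs_nonneg _
  have key : L ≤ γ * L := by
    calc L = ∑ s, |γ * ∑ s', h s' * q s' s| := by
          rw [hL]; exact Finset.sum_congr rfl fun s _ => by rw [hh s]
      _ ≤ ∑ s, γ * ∑ s', |h s'| * q s' s := by
          apply Finset.sum_le_sum; intro s _
          rw [abs_mul, abs_of_nonneg hγ0]
          apply mul_le_mul_of_nonneg_left _ hγ0
          calc |∑ s', h s' * q s' s| ≤ ∑ s', |h s' * q s' s| := Finset.abs_sum_le_sum_abs _ _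
            _ = ∑ s', |h s'| * q s' s := by
                exact Finset.sum_congr rfl fun s' _ => by
                  rw [abs_mul, abs_of_nonneg (hq0 s' s)]
      _ = γ * ∑ s', |h s'| * ∑ s, q s' s := by
          rw [← Finset.mul_sum, Finset.sum_comm]
          simp [Finset.mul_sum]
      _ = γ * L := by simp [hq1, hL]
  have hL0 : L = 0 := by nlinarith
  intro s
  have := (Finset.sum_eq_zero_iff_of_nonneg (fun s _ => abs_nonneg (h s))).1 hL0 s
    (Finset.mem_univ s)
  exact abs_eq_zero.1 this

end aux

section aux2
variable {S A : Type*} [Fintype S] [Fintype A]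

lemma sgail_occS_flow (P : S → A → S → ℝ) (hP0 : ∀ s a s', 0 ≤ P s a s')
    (hP1 : ∀ s a, ∑ s', P s a s' = 1)
    (π : S → A → ℝ) (hπ0 : ∀ s a, 0 ≤ π s a) (hπ1 : ∀ s, ∑ a, π s a = 1)
    (ρ0 : S → ℝ) (hρ00 : ∀ s, 0 ≤ ρ0 s) (hρ01 : ∑ s, ρ0 s = 1)
    (γ : ℝ) (hγ : 0 ≤ γ) (hγ1 : γ < 1) (s : S) :
    (∑' t : ℕ, γ ^ t * sgailStateDist P π ρ0 t s)
      = ρ0 s + γ * ∑ s', ∑ a,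
          (∑' t : ℕ, γ ^ t * sgailStateDist P π ρ0 t s') * π s' a * P s' a s := by
  have hsum : ∀ s', Summable (fun t : ℕ => γ ^ t * sgailStateDist P π ρ0 t s') :=
    fun s' => sgail_summable P hP0 hP1 π hπ0 hπ1 ρ0 hρ00 hρ01 γ hγ hγ1 s'
  rw [Summable.tsum_eq_zero_add (hsum s)]
  have h0 : γ ^ 0 * sgailStateDist P π ρ0 0 s = ρ0 s := by simp [sgailStateDist]
  rw [h0]
  congr 1
  have step : ∀ t : ℕ, γ ^ (t + 1) * sgailStateDist P π ρ0 (t + 1) s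
      = ∑ s', ∑ a, (γ ^ t * sgailStateDist P π ρ0 t s') * (γ * (π s' a * P s' a s)) := by
    intro t
    show γ ^ (t + 1) * (∑ s', ∑ a, sgailStateDist P π ρ0 t s' * π s' a * P s' a s) = _
    rw [Finset.mul_sum]
    refine Finset.sum_congr rfl fun s' _ => ?_
    rw [Finset.mul_sum]
    refine Finset.sum_congr rfl fun a _ => ?_
    rw [pow_succ]; ring
  calc (∑' t : ℕ, γ ^ (t + 1) * sgailStateDist P π ρ0 (t + 1) s)
      = ∑' t : ℕ, ∑ s', ∑ a,
          (γ ^ t * sgailStateDist P π ρ0 t s') * (γ * (π s' a * P s' a s)) :=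
        tsum_congr step
    _ = ∑ s', ∑' t : ℕ, ∑ a,
          (γ ^ t * sgailStateDist P π ρ0 t s') * (γ * (π s' a * P s' a s)) :=
        Summable.tsum_finsetSum fun s' _ => summable_sum fun a _ => (hsum s').mul_right _
    _ = ∑ s', ∑ a, ∑' t : ℕ,
          (γ ^ t * sgailStateDist P π ρ0 t s') * (γ * (π s' a * P s' a s)) :=
        Finset.sum_congr rfl fun s' _ => Summable.tsum_finsetSum fun a _ => (hsum s').mul_right _
    _ = ∑ s', ∑ a,
          (∑' t : ℕ, γ ^ t * sgailStateDist P π ρ0 t s') * (γ * (π s' a * P s' a s)) := by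
        simp only [tsum_mul_right]
    _ = γ * ∑ s', ∑ a,
          (∑' t : ℕ, γ ^ t * sgailStateDist P π ρ0 t s') * π s' a * P s' a s := by
        rw [Finset.mul_sum]
        refine Finset.sum_congr rfl fun s' _ => ?_
        rw [Finset.mul_sum]
        refine Finset.sum_congr rfl fun a _ => ?_
        ring

lemma sgail_occ_eq (P : S → A → S → ℝ) (π : S → A → ℝ) (ρ0 : S → ℝ)
    (γ : ℝ) (s : S) (a : A) :
    sgailOcc P π ρ0 γ s a = (∑' t : ℕ, γ ^ t * sgailStateDist P π ρ0 t s) * π s a :=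
  tsum_mul_right

end aux2

/-- The map π ↦ ρ_π is a bijection between stationary policies (up to behavior at states with
zero occupancy) and the Bellman-flow set
M = { ρ ≥ 0 : Σ_a ρ(s,a) = ρ₀(s) + γ Σ_{s',a'} P(s|s',a') ρ(s',a') }, with inverse
π(a|s) = ρ(s,a)/Σ_{a'} ρ(s,a'). -/
theorem sgail_stmt9 {S A : Type*} [Fintype S] [Fintype A] [Nonempty S] [Nonempty A]
    (P : S → A → S → ℝ) (hP0 : ∀ s a s', 0 ≤ P s a s') (hP1 : ∀ s a, ∑ s', P s a s' = 1)
    (ρ0 : S → ℝ) (hρ00 : ∀ s, 0 ≤ ρ0 s) (hρ01 : ∑ s, ρ0 s = 1)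
    (γ : ℝ) (hγ : 0 < γ) (hγ1 : γ < 1)
    (M : Set (S → A → ℝ))
    (hM : M = {ρ | (∀ s a, 0 ≤ ρ s a) ∧
      ∀ s, ∑ a, ρ s a = ρ0 s + γ * ∑ s', ∑ a', P s' a' s * ρ s' a'}) :
    -- (i) every stationary policy's occupancy measure lies in M
    (∀ π : S → A → ℝ, (∀ s a, 0 ≤ π s a) → (∀ s, ∑ a, π s a = 1) →
        sgailOcc P π ρ0 γ ∈ M) ∧
    -- (ii) surjectivity, with the stated inverse formula
    (∀ ρ ∈ M, ∃ π : S → A → ℝ, (∀ s a, 0 ≤ π s a) ∧ (∀ s, ∑ a, π s a = 1) ∧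
        (∀ s a, (∑ a', ρ s a') ≠ 0 → π s a = ρ s a / ∑ a', ρ s a') ∧
        sgailOcc P π ρ0 γ = ρ) ∧
    -- (iii) injectivity on states with positive occupancy: the policy is recovered from ρ_π
    (∀ π : S → A → ℝ, (∀ s a, 0 ≤ π s a) → (∀ s, ∑ a, π s a = 1) →
        ∀ s a, 0 < ∑ a', sgailOcc P π ρ0 γ s a' →
          π s a = sgailOcc P π ρ0 γ s a / ∑ a', sgailOcc P π ρ0 γ s a') := by
  classical
  have hγ0 : 0 ≤ γ := hγ.le
  -- notation
  set occS : (S → A → ℝ) → S → ℝ :=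
    fun π s => ∑' t : ℕ, γ ^ t * sgailStateDist P π ρ0 t s with hoccS
  have hoccS_nonneg : ∀ (π : S → A → ℝ), (∀ s a, 0 ≤ π s a) → (∀ s, ∑ a, π s a = 1) →
      ∀ s, 0 ≤ occS π s := by
    intro π hπ0 hπ1 s
    have hd := sgail_dist_props P hP0 hP1 π hπ0 hπ1 ρ0 hρ00 hρ01
    exact tsum_nonneg fun t => mul_nonneg (pow_nonneg hγ0 t) ((hd t).1 s)
  have hsum_occ : ∀ (π : S → A → ℝ), (∀ s a, 0 ≤ π s a) → (∀ s, ∑ a, π s a = 1) →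
      ∀ s, ∑ a, sgailOcc P π ρ0 γ s a = occS π s := by
    intro π hπ0 hπ1 s
    calc ∑ a, sgailOcc P π ρ0 γ s a = ∑ a, occS π s * π s a := by
          exact Finset.sum_congr rfl fun a _ => sgail_occ_eq P π ρ0 γ s a
      _ = occS π s * ∑ a, π s a := by rw [Finset.mul_sum]
      _ = occS π s := by rw [hπ1, mul_one]
  refine ⟨?_, ?_, ?_⟩
  · -- (i)
    intro π hπ0 hπ1
    rw [hM]
    constructor
    · intro s a
      rw [sgail_occ_eq]
      exact mul_nonneg (hoccS_nonneg π hπ0 hπ1 s) (hπ0 s a)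
    · intro s
      rw [hsum_occ π hπ0 hπ1 s]
      have hflow := sgail_occS_flow P hP0 hP1 π hπ0 hπ1 ρ0 hρ00 hρ01 γ hγ0 hγ1 s
      show (∑' t : ℕ, γ ^ t * sgailStateDist P π ρ0 t s) = _
      rw [hflow]
      congr 1
      congr 1
      refine Finset.sum_congr rfl fun s' _ => Finset.sum_congr rfl fun a' _ => ?_
      rw [sgail_occ_eq]
      ring
  · -- (ii)
    intro ρ hρ
    rw [hM] at hρ
    obtain ⟨hρnn, hρflow⟩ := hρ
    set r : S → ℝ := fun s => ∑ a, ρ s a with hr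
    have hrnn : ∀ s, 0 ≤ r s := fun s => Finset.sum_nonneg fun a _ => hρnn s a
    set π : S → A → ℝ :=
      fun s a => if r s = 0 then (Fintype.card A : ℝ)⁻¹ else ρ s a / r s with hπ
    have hcard : (0 : ℝ) < Fintype.card A := by
      exact_mod_cast Fintype.card_pos
    have hπ0 : ∀ s a, 0 ≤ π s a := by
      intro s a
      rw [hπ]; dsimp only
      split
      · positivity
      · exact div_nonneg (hρnn s a) (hrnn s)
    have hπ1 : ∀ s, ∑ a, π s a = 1 := by
      intro s
      rw [hπ]; dsimp only
      by_cases h : r s = 0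
      · simp [h, Finset.card_univ]
      · simp only [h, if_false]
        rw [← Finset.sum_div]
        exact div_self h
    have hfactor : ∀ s a, ρ s a = r s * π s a := by
      intro s a
      rw [hπ]; dsimp only
      by_cases h : r s = 0
      · have : ρ s a = 0 := by
          have := (Finset.sum_eq_zero_iff_of_nonneg (fun a _ => hρnn s a)).1 h a
            (Finset.mem_univ a)
          exact this
        rw [this, h, zero_mul]
      · rw [if_neg h, mul_div_cancel₀ _ h]
    set q : S → S → ℝ := fun s' s => ∑ a, π s' a * P s' a s with hq
    have hq0 : ∀ s' s, 0 ≤ q s' s :=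
      fun s' s => Finset.sum_nonneg fun a _ => mul_nonneg (hπ0 s' a) (hP0 s' a s)
    have hq1 : ∀ s', ∑ s, q s' s = 1 := by
      intro s'
      rw [hq]; dsimp only
      rw [Finset.sum_comm]
      calc ∑ a, ∑ s, π s' a * P s' a s = ∑ a, π s' a * ∑ s, P s' a s := by
            simp [Finset.mul_sum]
        _ = ∑ a, π s' a := by simp [hP1]
        _ = 1 := hπ1 s'
    have hrflow : ∀ s, r s = ρ0 s + γ * ∑ s', r s' * q s' s := by
      intro s
      rw [hr]; dsimp only
      rw [hρflow s]
      congr 1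
      congr 1
      refine Finset.sum_congr rfl fun s' _ => ?_
      rw [hq]; dsimp only
      rw [Finset.mul_sum]
      refine Finset.sum_congr rfl fun a' _ => ?_
      rw [hfactor s' a']
      ring
    have hoflow : ∀ s, occS π s = ρ0 s + γ * ∑ s', occS π s' * q s' s := by
      intro s
      rw [hoccS]; dsimp only
      rw [sgail_occS_flow P hP0 hP1 π hπ0 hπ1 ρ0 hρ00 hρ01 γ hγ0 hγ1 s]
      congr 1
      congr 1
      refine Finset.sum_congr rfl fun s' _ => ?_
      rw [hq]; dsimp only
      rw [Finset.mul_sum]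
      refine Finset.sum_congr rfl fun a _ => ?_
      ring
    have hzero : ∀ s, occS π s - r s = 0 := by
      apply sgail_l1_unique γ hγ0 hγ1 q hq0 hq1
      intro s
      rw [hoflow s, hrflow s]
      have : ∑ s', (occS π s' - r s') * q s' s
          = ∑ s', occS π s' * q s' s - ∑ s', r s' * q s' s := by
        rw [← Finset.sum_sub_distrib]
        exact Finset.sum_congr rfl fun s' _ => by ring
      rw [this]
      ring
    have hoccr : ∀ s, occS π s = r s := fun s => by linarith [hzero s]
    refine ⟨π, hπ0, hπ1, ?_, ?_⟩
    · intro s a hne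
      rw [hπ]; dsimp only
      rw [if_neg hne]
    · funext s a
      rw [sgail_occ_eq]
      show occS π s * π s a = ρ s a
      rw [hoccr s]
      exact (hfactor s a).symm
  · -- (iii)
    intro π hπ0 hπ1 s a hpos
    rw [hsum_occ π hπ0 hπ1 s] at hpos ⊢
    rw [sgail_occ_eq]
    show π s a = occS π s * π s a / occS π s
    rw [mul_comm, mul_div_assoc, div_self hpos.ne', mul_one]
end
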